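/- For any finite alphabet 𝒳 and any type p of sequences of length n (i.e., an empirical distribution with all probabilities multiples of 1/n), the cardinality of the type class 𝒯ⁿ_p satisfies (1+n)^{-|𝒳|} · 2^{n H(p)} ≤ |𝒯ⁿ_p| ≤ 2^{n H(p)}, where H(p) = -∑_x p(x) log₂ p(x) is the Shannon entropy. -/

import Mathlib

open Finset

/-- Shannon entropy (base 2) of a probability vector on a finite alphabet. -/
noncomputable def shannonEntropy {X : Type*} [Fintype X] (p : X → ℝ) : ℝ :=
  -∑ x, p x * Real.logb 2 (p x)


/-- `k! * k^l ≤ l! * k^k` for all naturals. -/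
lemma fact_pow_le_aux (k l : ℕ) : k.factorial * k ^ l ≤ l.factorial * k ^ k := by
  rcases le_total l k with h | h
  · have key : ∀ m, l ≤ m → m.factorial ≤ l.factorial * m ^ (m - l) → True := fun _ _ _ => trivial
    have main : k.factorial ≤ l.factorial * k ^ (k - l) := by
      clear key
      induction k, h using Nat.le_induction with
      | base => simp
      | succ m hm ih =>
        have h1 : (m+1).factorial = (m+1) * m.factorial := rfl
        have h2 : m ^ (m - l) ≤ (m+1) ^ (m - l) := Nat.pow_le_pow_left (by omega) _
        have h3 : m + 1 - l = (m - l) + 1 := by omega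
        calc (m+1).factorial = (m+1) * m.factorial := rfl
          _ ≤ (m+1) * (l.factorial * m ^ (m - l)) := Nat.mul_le_mul_left _ ih
          _ ≤ (m+1) * (l.factorial * (m+1) ^ (m - l)) := by
              exact Nat.mul_le_mul_left _ (Nat.mul_le_mul_left _ h2)
          _ = l.factorial * (m+1) ^ (m + 1 - l) := by rw [h3, pow_succ]; ring
    calc k.factorial * k ^ l ≤ (l.factorial * k ^ (k - l)) * k ^ l :=
          Nat.mul_le_mul_right _ main
      _ = l.factorial * k ^ k := by rw [mul_assoc, ← pow_add]; congr 2; omega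
  · have main : k.factorial * k ^ (l - k) ≤ l.factorial := by
      induction l, h using Nat.le_induction with
      | base => simp
      | succ m hm ih =>
        have h3 : m + 1 - k = (m - k) + 1 := by omega
        calc k.factorial * k ^ (m + 1 - k) = (k.factorial * k ^ (m - k)) * k := by
              rw [h3, pow_succ]; ring
          _ ≤ m.factorial * k := Nat.mul_le_mul_right _ ih
          _ ≤ m.factorial * (m+1) := Nat.mul_le_mul_left _ (by omega)
          _ = (m+1).factorial := by rw [Nat.factorial_succ]; ring
    calc k.factorial * k ^ l = (k.factorial * k ^ (l - k)) * k ^ k := by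
          rw [mul_assoc, ← pow_add]; congr 2; omega
      _ ≤ l.factorial * k ^ k := Nat.mul_le_mul_right _ main


lemma count_succ_decomp {X : Type*} [Fintype X] [DecidableEq X] {m : ℕ}
    (x : Fin (m+1) → X) (b : X) :
    (univ.filter fun k => x k = b).card
      = (if x 0 = b then 1 else 0) + (univ.filter fun k : Fin m => x k.succ = b).card := by
  rw [Finset.card_filter, Finset.card_filter, Fin.sum_univ_succ]

/-- Number of sequences with count vector `c` times `∏ (c a)!` equals `m!`. -/
lemma card_fiber_mul_factorial {X : Type*} [Fintype X] [DecidableEq X] :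
    ∀ (m : ℕ) (c : X → ℕ), (∑ a, c a) = m →
      (univ.filter fun x : Fin m → X =>
          ∀ a, (univ.filter fun k => x k = a).card = c a).card
        * ∏ a, (c a).factorial = m.factorial := by
  intro m
  induction m with
  | zero =>
    intro c hc
    have hc0 : ∀ a, c a = 0 := fun a =>
      (Finset.sum_eq_zero_iff.1 hc) a (mem_univ a)
    have hfilter : (univ.filter fun x : Fin 0 → X =>
        ∀ a, (univ.filter fun k => x k = a).card = c a) = univ := by
      apply Finset.filter_true_of_mem
      intro x _ a
      rw [hc0 a]
      simp
    rw [hfilter]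
    simp [hc0, Finset.card_univ, Fintype.card_pi_const]
  | succ m ih =>
    intro c hc
    have hterm : ∀ a : X,
        ((univ.filter fun x : Fin (m+1) → X =>
            ∀ b, (univ.filter fun k => x k = b).card = c b).filter fun x => x 0 = a).card
          * ∏ b, (c b).factorial
          = c a * m.factorial := by
      intro a
      rcases Nat.eq_zero_or_pos (c a) with hca | hca
      · have hempty : ((univ.filter fun x : Fin (m+1) → X =>
            ∀ b, (univ.filter fun k => x k = b).card = c b).filter fun x => x 0 = a) = ∅ := by
          apply Finset.eq_empty_of_forall_notMem
          intro x hx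
          simp only [Finset.mem_filter, Finset.mem_univ, true_and] at hx
          obtain ⟨hxc, hx0⟩ := hx
          have h1 := hxc a
          have h2 := count_succ_decomp x a
          rw [h1, hca, if_pos hx0] at h2
          omega
        rw [hempty]
        simp [hca]
      · obtain ⟨s, hs⟩ : ∃ s, c a = s + 1 := ⟨c a - 1, by omega⟩
        have hc'a : Function.update c a s a = s := Function.update_self a s c
        have hc'ne : ∀ b ≠ a, Function.update c a s b = c b :=
          fun b hb => Function.update_of_ne hb s c
        have hsum' : ∑ b, Function.update c a s b = m := by
          have h1 : ∑ b, Function.update c a s b = s + ∑ b ∈ univ.erase a, c b := by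
            rw [← Finset.add_sum_erase _ _ (mem_univ a), hc'a]
            congr 1
            exact Finset.sum_congr rfl fun b hb => hc'ne b (Finset.ne_of_mem_erase hb)
          have h2 : ∑ b, c b = c a + ∑ b ∈ univ.erase a, c b :=
            (Finset.add_sum_erase _ c (mem_univ a)).symm
          omega
        have hcardeq : ((univ.filter fun x : Fin (m+1) → X =>
              ∀ b, (univ.filter fun k => x k = b).card = c b).filter fun x => x 0 = a).card
            = (univ.filter fun y : Fin m → X =>
              ∀ b, (univ.filter fun k => y k = b).card = Function.update c a s b).card := by
          refine Finset.card_nbij' (fun x => fun k : Fin m => x k.succ)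
            (fun y => Fin.cons a y) ?_ ?_ ?_ ?_
          · -- i maps into target
            intro x hx
            simp only [Finset.mem_coe, Finset.mem_filter, Finset.mem_univ, true_and] at hx ⊢
            obtain ⟨hxc, hx0⟩ := hx
            intro b
            have h2 := count_succ_decomp x b
            rw [hxc b] at h2
            by_cases hb : b = a
            · subst hb
              rw [if_pos hx0, hs] at h2
              rw [hc'a]
              omega
            · rw [if_neg (by rw [hx0]; exact fun h => hb h.symm)] at h2
              rw [hc'ne b hb]
              omega
          · -- j maps back
            intro y hy
            simp only [Finset.mem_coe, Finset.mem_filter, Finset.mem_univ, true_and] at hy ⊢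
            refine ⟨fun b => ?_, by simp⟩
            have h2 := count_succ_decomp (Fin.cons a y : Fin (m+1) → X) b
            simp only [Fin.cons_zero, Fin.cons_succ] at h2
            rw [hy b] at h2
            by_cases hb : b = a
            · subst hb
              rw [if_pos rfl, hc'a] at h2
              omega
            · rw [if_neg (fun h => hb h.symm), hc'ne b hb] at h2
              omega
          · -- left inverse
            intro x hx
            simp only [Finset.mem_coe, Finset.mem_filter] at hx
            funext k
            rcases Fin.eq_zero_or_eq_succ k with hk | ⟨j, hj⟩
            · subst hk
              simp only [Fin.cons_zero]
              exact hx.2.symm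
            · subst hj
              simp only [Fin.cons_succ]
          · -- right inverse
            intro y _
            funext k
            simp only [Fin.cons_succ]
        have hprodc : ∏ b, (c b).factorial
            = (s+1) * ∏ b, (Function.update c a s b).factorial := by
          rw [← Finset.mul_prod_erase _ _ (mem_univ a),
              ← Finset.mul_prod_erase _ (fun b => (Function.update c a s b).factorial)
                (mem_univ a), hc'a, hs, Nat.factorial_succ]
          have heq : ∏ b ∈ univ.erase a, (c b).factorial
              = ∏ b ∈ univ.erase a, (Function.update c a s b).factorial :=
            Finset.prod_congr rfl fun b hb => by rw [hc'ne b (Finset.ne_of_mem_erase hb)]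
          rw [heq]; ring
        rw [hcardeq, hprodc, hs]
        calc (univ.filter fun y : Fin m → X =>
              ∀ b, (univ.filter fun k => y k = b).card = Function.update c a s b).card
              * ((s+1) * ∏ b, (Function.update c a s b).factorial)
            = (s+1) * ((univ.filter fun y : Fin m → X =>
                ∀ b, (univ.filter fun k => y k = b).card = Function.update c a s b).card
                * ∏ b, (Function.update c a s b).factorial) := by ring
          _ = (s+1) * m.factorial := by rw [ih _ hsum']
    have hsplit : (univ.filter fun x : Fin (m+1) → X =>
          ∀ a, (univ.filter fun k => x k = a).card = c a).card
        = ∑ a : X, ((univ.filter fun x : Fin (m+1) → X =>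
            ∀ b, (univ.filter fun k => x k = b).card = c b).filter fun x => x 0 = a).card :=
      Finset.card_eq_sum_card_fiberwise (fun x _ => mem_univ (x 0))
    calc (univ.filter fun x : Fin (m+1) → X =>
          ∀ a, (univ.filter fun k => x k = a).card = c a).card * ∏ a, (c a).factorial
        = ∑ a : X, ((univ.filter fun x : Fin (m+1) → X =>
            ∀ b, (univ.filter fun k => x k = b).card = c b).filter fun x => x 0 = a).card
            * ∏ b, (c b).factorial := by
          rw [hsplit, Finset.sum_mul]
      _ = ∑ a : X, c a * m.factorial := Finset.sum_congr rfl fun a _ => hterm a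
      _ = (∑ a, c a) * m.factorial := by rw [Finset.sum_mul]
      _ = (m+1).factorial := by rw [hc, Nat.factorial_succ]


lemma two_rpow_sum {α : Type*} (s : Finset α) (f : α → ℝ) :
    (2:ℝ) ^ (∑ a ∈ s, f a) = ∏ a ∈ s, (2:ℝ) ^ f a := by
  classical
  induction s using Finset.cons_induction with
  | empty => simp
  | cons a s ha ih => rw [Finset.sum_cons, Finset.prod_cons, Real.rpow_add two_pos, ih]

lemma prod_eq_prod_pow_count {X : Type*} [Fintype X] [DecidableEq X] {n : ℕ}
    (p : X → ℝ) (x : Fin n → X) :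
    ∏ k, p (x k) = ∏ a, p a ^ (univ.filter fun k => x k = a).card := by
  rw [Finset.prod_comp p x]
  apply Finset.prod_subset (subset_univ _)
  intro b _ hb
  have : (univ.filter fun k => x k = b) = ∅ := by
    apply Finset.eq_empty_of_forall_notMem
    intro k hk
    exact hb (Finset.mem_image.2 ⟨k, mem_univ k, (Finset.mem_filter.1 hk).2⟩)
  rw [this]
  simp

lemma sum_count_eq {X : Type*} [Fintype X] [DecidableEq X] {n : ℕ} (x : Fin n → X) :
    ∑ a, (univ.filter fun k => x k = a).card = n := by
  have := Finset.card_eq_sum_card_fiberwise (f := x) (s := univ) (t := univ)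
    (fun k _ => mem_univ (x k))
  simpa using this.symm

/-- For a type `p` of sequences of length `n` over a finite alphabet `X`
(i.e. the empirical distribution of some sequence), the cardinality of the
type class `T` satisfies `(1+n)^{-|X|} 2^{n H(p)} ≤ |T| ≤ 2^{n H(p)}`. -/
theorem type_class_card_bounds {X : Type*} [Fintype X] [DecidableEq X] (n : ℕ)
    (hn : 0 < n) (p : X → ℝ) (T : Finset (Fin n → X))
    (hT : ∀ x : Fin n → X,
      x ∈ T ↔ ∀ a : X, (((univ.filter (fun k => x k = a)).card : ℝ) = n * p a))
    (hp : T.Nonempty) :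
    ((1 + (n : ℝ)) ^ (-(Fintype.card X : ℝ))) * (2 : ℝ) ^ ((n : ℝ) * shannonEntropy p)
        ≤ (T.card : ℝ) ∧
      (T.card : ℝ) ≤ (2 : ℝ) ^ ((n : ℝ) * shannonEntropy p) := by
  classical
  obtain ⟨x₀, hx₀⟩ := hp
  have hnpos : (0:ℝ) < n := by exact_mod_cast hn
  set c : X → ℕ := fun a => (univ.filter fun k => x₀ k = a).card with hcdef
  have hc : ∀ a, (c a : ℝ) = n * p a := (hT x₀).1 hx₀
  have hpa : ∀ a, p a = (c a : ℝ) / n := fun a => by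
    rw [hc a]; field_simp
  have hpnn : ∀ a, 0 ≤ p a := fun a => by rw [hpa a]; exact div_nonneg (Nat.cast_nonneg _) (Nat.cast_nonneg _)
  have hsumc : ∑ a, c a = n := sum_count_eq x₀
  have hsump : ∑ a, p a = 1 := by
    have h1 : ∑ a, p a = (∑ a, (c a : ℝ)) / n := by
      rw [Finset.sum_congr rfl fun a _ => hpa a, Finset.sum_div]
    have h2 : ∑ a, (c a:ℝ) = (n:ℝ) := by exact_mod_cast congrArg Nat.cast hsumc
    rw [h1, h2, div_self hnpos.ne']
  have hTF : T = univ.filter fun x : Fin n → X =>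
      ∀ a, (univ.filter fun k => x k = a).card = c a := by
    ext x
    rw [hT x, Finset.mem_filter]
    constructor
    · intro h
      refine ⟨mem_univ x, fun a => ?_⟩
      have : ((univ.filter fun k => x k = a).card : ℝ) = (c a : ℝ) := (h a).trans (hc a).symm
      exact_mod_cast this
    · intro h a
      rw [← hc a]
      exact_mod_cast congrArg (Nat.cast (R := ℝ)) (h.2 a)
  set π : ℝ := ∏ a, p a ^ c a with hπdef
  have hca0 : ∀ a, p a = 0 → c a = 0 := fun a h => by
    have := hc a; rw [h, mul_zero] at this; exact_mod_cast this
  have hfac : ∀ a, p a ^ c a = (2:ℝ) ^ ((c a : ℝ) * Real.logb 2 (p a)) := by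
    intro a
    rcases eq_or_lt_of_le (hpnn a) with h0 | hpos
    · rw [← h0, hca0 a h0.symm]
      simp
    · rw [mul_comm, Real.rpow_mul (by norm_num : (0:ℝ) ≤ 2),
        Real.rpow_logb two_pos (by norm_num) hpos, Real.rpow_natCast]
  have hπ2 : π = (2:ℝ) ^ (-((n:ℝ) * shannonEntropy p)) := by
    rw [hπdef, Finset.prod_congr rfl fun a _ => hfac a, ← two_rpow_sum]
    congr 1
    have h3 : ∀ a ∈ univ, (c a : ℝ) * Real.logb 2 (p a)
        = (n:ℝ) * (p a * Real.logb 2 (p a)) := fun a _ => by rw [hc a]; ring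
    rw [Finset.sum_congr rfl h3, ← Finset.mul_sum, shannonEntropy]
    ring
  have hπpos : 0 < π := hπ2 ▸ Real.rpow_pos_of_pos two_pos _
  have hπinv : π⁻¹ = (2:ℝ) ^ ((n:ℝ) * shannonEntropy p) := by
    rw [hπ2, ← Real.rpow_neg (by norm_num : (0:ℝ) ≤ 2), neg_neg]
  have hw : ∀ x : Fin n → X, 0 ≤ ∏ k, p (x k) :=
    fun x => Finset.prod_nonneg fun k _ => hpnn _
  have hwT : ∀ x ∈ T, ∏ k, p (x k) = π := by
    intro x hx
    rw [hTF, Finset.mem_filter] at hx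
    rw [prod_eq_prod_pow_count p x, hπdef]
    exact Finset.prod_congr rfl fun a _ => by rw [hx.2 a]
  have hsum1 : ∑ x : Fin n → X, ∏ k, p (x k) = 1 := by
    have h4 := (Fintype.prod_sum (fun _ : Fin n => fun a : X => p a)).symm
    rw [h4, Finset.prod_congr rfl fun k _ => hsump, Finset.prod_const_one]
  have hTsum : ∑ x ∈ T, ∏ k, p (x k) = (T.card : ℝ) * π := by
    rw [Finset.sum_congr rfl hwT, Finset.sum_const, nsmul_eq_mul]
  have hub : (T.card : ℝ) * π ≤ 1 := by
    rw [← hTsum, ← hsum1]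
    exact Finset.sum_le_sum_of_subset_of_nonneg (subset_univ T) fun x _ _ => hw x
  have upper : (T.card : ℝ) ≤ (2:ℝ) ^ ((n:ℝ) * shannonEntropy p) := by
    rw [← hπinv, ← one_div]
    exact (le_div_iff₀ hπpos).2 hub
  -- lower bound
  set t : (Fin n → X) → (X → ℕ) := fun x a => (univ.filter fun k => x k = a).card with htdef
  have hfib : ∑ d ∈ univ.image t, ∑ x ∈ univ.filter (fun x => t x = d), ∏ k, p (x k)
      = ∑ x : Fin n → X, ∏ k, p (x k) :=
    Finset.sum_fiberwise_of_maps_to (fun x _ => Finset.mem_image_of_mem t (mem_univ x)) _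
  have hfiber_le : ∀ d ∈ univ.image t,
      ∑ x ∈ univ.filter (fun x => t x = d), ∏ k, p (x k) ≤ (T.card : ℝ) * π := by
    intro d hd
    obtain ⟨x₁, _, hx₁⟩ := Finset.mem_image.1 hd
    have hsumd : ∑ a, d a = n := by rw [← hx₁]; exact sum_count_eq x₁
    have hwd : ∀ x ∈ univ.filter (fun x => t x = d), ∏ k, p (x k) = ∏ a, p a ^ d a := by
      intro x hx
      have hxd : ∀ a, (univ.filter fun k => x k = a).card = d a := by
        intro a
        have h5 := (Finset.mem_filter.1 hx).2
        exact congrFun h5 a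
      rw [prod_eq_prod_pow_count p x]
      exact Finset.prod_congr rfl fun a _ => by rw [hxd a]
    rw [Finset.sum_congr rfl hwd, Finset.sum_const, nsmul_eq_mul]
    have hFdeq : univ.filter (fun x : Fin n → X => t x = d)
        = univ.filter fun x : Fin n → X =>
            ∀ a, (univ.filter fun k => x k = a).card = d a := by
      apply Finset.filter_congr
      intro x _
      simp only [htdef, funext_iff]
    have hcard_d : ((univ.filter (fun x : Fin n → X => t x = d)).card : ℝ)
        * ∏ a, ((d a).factorial : ℝ) = (n.factorial : ℝ) := by
      rw [hFdeq]
      exact_mod_cast congrArg (Nat.cast (R := ℝ)) (card_fiber_mul_factorial n d hsumd)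
    have hcard_c : ((T.card : ℝ)) * ∏ a, ((c a).factorial : ℝ) = (n.factorial : ℝ) := by
      rw [hTF]
      exact_mod_cast congrArg (Nat.cast (R := ℝ)) (card_fiber_mul_factorial n c hsumc)
    set C : ℝ := ∏ a, ((c a).factorial : ℝ) with hCdef
    set D : ℝ := ∏ a, ((d a).factorial : ℝ) with hDdef
    set πd : ℝ := ∏ a, p a ^ d a with hπddef
    have hCpos : 0 < C := Finset.prod_pos fun a _ => by positivity
    have hDpos : 0 < D := Finset.prod_pos fun a _ => by positivity
    have hnc : ∀ a, p a * (n:ℝ) = (c a : ℝ) := fun a => by rw [hc a]; ring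
    have claim1 : C * πd * (n:ℝ)^n = ∏ a, (((c a).factorial : ℝ) * (c a:ℝ) ^ (d a)) := by
      have hnn : (n:ℝ)^n = ∏ a, (n:ℝ) ^ (d a) := by
        rw [Finset.prod_pow_eq_pow_sum, hsumd]
      rw [hCdef, hπddef, hnn, ← Finset.prod_mul_distrib, ← Finset.prod_mul_distrib]
      refine Finset.prod_congr rfl fun a _ => ?_
      rw [mul_assoc, ← mul_pow, hnc a]
    have claim2 : D * π * (n:ℝ)^n = ∏ a, (((d a).factorial : ℝ) * (c a:ℝ) ^ (c a)) := by
      have hnn : (n:ℝ)^n = ∏ a, (n:ℝ) ^ (c a) := by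
        rw [Finset.prod_pow_eq_pow_sum, hsumc]
      rw [hDdef, hπdef, hnn, ← Finset.prod_mul_distrib, ← Finset.prod_mul_distrib]
      refine Finset.prod_congr rfl fun a _ => ?_
      rw [mul_assoc, ← mul_pow, hnc a]
    have claim3 : ∏ a, (((c a).factorial : ℝ) * (c a:ℝ) ^ (d a))
        ≤ ∏ a, (((d a).factorial : ℝ) * (c a:ℝ) ^ (c a)) := by
      apply Finset.prod_le_prod
      · intro a _; exact mul_nonneg (Nat.cast_nonneg _) (pow_nonneg (Nat.cast_nonneg _) _)
      · intro a _
        exact_mod_cast fact_pow_le_aux (c a) (d a)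
    have hCπ : C * πd ≤ D * π := by
      have h6 : C * πd * (n:ℝ)^n ≤ D * π * (n:ℝ)^n := by
        rw [claim1, claim2]; exact claim3
      exact le_of_mul_le_mul_right h6 (by positivity)
    have hfinal : ((univ.filter (fun x : Fin n → X => t x = d)).card : ℝ) * πd
        ≤ (T.card : ℝ) * π := by
      have h7 : ((univ.filter (fun x : Fin n → X => t x = d)).card : ℝ) * πd * (C * D)
          ≤ (T.card : ℝ) * π * (C * D) := by
        calc ((univ.filter (fun x : Fin n → X => t x = d)).card : ℝ) * πd * (C * D)
            = (((univ.filter (fun x : Fin n → X => t x = d)).card : ℝ) * D) * (C * πd) := by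
              ring
          _ = (n.factorial : ℝ) * (C * πd) := by rw [hcard_d]
          _ ≤ (n.factorial : ℝ) * (D * π) := by
              apply mul_le_mul_of_nonneg_left hCπ (by positivity)
          _ = ((T.card : ℝ) * C) * (D * π) := by rw [hcard_c]
          _ = (T.card : ℝ) * π * (C * D) := by ring
      exact le_of_mul_le_mul_right h7 (by positivity)
    exact hfinal
  have himgcard : ((univ.image t).card : ℝ) ≤ ((n+1:ℕ):ℝ) ^ (Fintype.card X) := by
    have hsub : univ.image t ⊆ Fintype.piFinset (fun _ : X => Finset.range (n+1)) := by
      intro d hd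
      obtain ⟨x, _, hx⟩ := Finset.mem_image.1 hd
      rw [Fintype.mem_piFinset]
      intro a
      rw [Finset.mem_range, ← hx]
      apply Nat.lt_succ_of_le
      calc t x a ≤ (univ : Finset (Fin n)).card := Finset.card_filter_le _ _
        _ = n := by simp
    have h8 := Finset.card_le_card hsub
    rw [Fintype.card_piFinset] at h8
    simp only [Finset.card_range, Finset.prod_const, Finset.card_univ] at h8
    exact_mod_cast h8
  have hlb : (1:ℝ) ≤ ((n+1:ℕ):ℝ)^(Fintype.card X) * ((T.card:ℝ) * π) := by
    calc (1:ℝ) = ∑ x : Fin n → X, ∏ k, p (x k) := hsum1.symm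
      _ = ∑ d ∈ univ.image t, ∑ x ∈ univ.filter (fun x => t x = d), ∏ k, p (x k) := hfib.symm
      _ ≤ ∑ _d ∈ univ.image t, (T.card:ℝ) * π := Finset.sum_le_sum hfiber_le
      _ = ((univ.image t).card : ℝ) * ((T.card:ℝ)*π) := by
          rw [Finset.sum_const, nsmul_eq_mul]
      _ ≤ ((n+1:ℕ):ℝ)^(Fintype.card X) * ((T.card:ℝ)*π) := by
          apply mul_le_mul_of_nonneg_right himgcard
          exact mul_nonneg (Nat.cast_nonneg _) hπpos.le
  have lower : ((1 + (n : ℝ)) ^ (-(Fintype.card X : ℝ))) * (2 : ℝ) ^ ((n : ℝ) * shannonEntropy p)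
      ≤ (T.card : ℝ) := by
    have h1n : (1 + (n:ℝ)) = ((n+1:ℕ):ℝ) := by push_cast; ring
    have hbpos : (0:ℝ) < 1 + n := by positivity
    have h9 : ((1 + (n:ℝ)) ^ (-(Fintype.card X : ℝ)))
        = (((n+1:ℕ):ℝ) ^ (Fintype.card X))⁻¹ := by
      rw [Real.rpow_neg hbpos.le, h1n, Real.rpow_natCast]
    rw [h9, ← hπinv]
    set A : ℝ := ((n+1:ℕ):ℝ) ^ (Fintype.card X) with hAdef
    have hApos : 0 < A := by positivity
    have h10 : 1 ≤ (T.card : ℝ) * (A * π) := by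
      calc (1:ℝ) ≤ A * ((T.card:ℝ) * π) := hlb
        _ = (T.card : ℝ) * (A * π) := by ring
    have h11 : 1 / (A * π) ≤ (T.card : ℝ) := (div_le_iff₀ (by positivity)).2 (by linarith)
    calc A⁻¹ * π⁻¹ = 1 / (A * π) := by rw [one_div, mul_inv]
      _ ≤ (T.card : ℝ) := h11
  exact ⟨lower, upper⟩
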